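/- For a polynomial p on ℝ^d, the identity p(y)·Γ₀(t,x;s,y) = p(ℳˣ(t,s)) Γ₀(t,x;s,y) holds, where p(ℳˣ(t,s)) denotes the differential operator obtained by substituting the commuting operators ℳᵢˣ(t,s) = xᵢ + 𝔪ᵢ(t,s) + ∑ⱼ𝒞ᵢⱼ(t,s)∂_{xⱼ} for the variables of p. -/

import Mathlib

/-!
Differentiating the exponent gives `∇ₓΓ₀ = 𝒞⁻¹(y - x - 𝔪) Γ₀` (this uses the symmetry of `𝒞`),
so `𝒞∇ₓΓ₀ = (y - x - 𝔪) Γ₀` and `ℳᵢˣ Γ₀ = yᵢ Γ₀`: the Gaussian is a joint eigenfunction of the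
`ℳᵢˣ` with eigenvalues `yᵢ`. As the `ℳᵢˣ` commute with multiplication by constants, every
monomial operator `∏ (ℳᵢˣ)^{kᵢ}` multiplies `Γ₀` by `∏ yᵢ^{kᵢ}`, and summing over the monomials
of `p` gives `p(y) Γ₀`.
-/

open MeasureTheory Real Matrix

noncomputable section

/-- The `d`-dimensional Gaussian density with mean `x + mv` and covariance matrix `Cv`. -/
def gauss {d : ℕ} (Cv : Matrix (Fin d) (Fin d) ℝ) (mv : Fin d → ℝ) (x y : Fin d → ℝ) : ℝ :=
  (2 * π) ^ (-(d : ℝ) / 2) * Cv.det ^ (-(1 : ℝ) / 2) *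
    Real.exp (-(1 / 2) * (dotProduct (Matrix.mulVec Cv⁻¹ (y - x - mv)) (y - x - mv)))

/-- Partial derivative `∂_{x_i}`. -/
def pd {d : ℕ} (i : Fin d) (f : (Fin d → ℝ) → ℝ) : (Fin d → ℝ) → ℝ :=
  fun x => fderiv ℝ f x (Pi.single i 1)

/-- The `i`-th component `ℳᵢˣ = xᵢ + 𝔪ᵢ + ∑ⱼ 𝒞ᵢⱼ ∂_{xⱼ}` of `ℳˣ = x + 𝔪 + 𝒞∇ₓ`. -/
def Mop {d : ℕ} (Cv : Matrix (Fin d) (Fin d) ℝ) (mv : Fin d → ℝ) (i : Fin d)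
    (f : (Fin d → ℝ) → ℝ) : (Fin d → ℝ) → ℝ :=
  fun x => (x i + mv i) * f x + ∑ j, Cv i j * pd j f x

/-- The operator `p(ℳˣ)` obtained from a polynomial `p` by substituting the
(on `Γ₀` commuting) operators `ℳᵢˣ` for the variables: for each monomial
`c·∏ xᵢ^{kᵢ}` of `p` apply `∏ (ℳᵢˣ)^{kᵢ}` (in a fixed order) and multiply by `c`. -/
def polyOp {d : ℕ} (Cv : Matrix (Fin d) (Fin d) ℝ) (mv : Fin d → ℝ)
    (p : MvPolynomial (Fin d) ℝ) (f : (Fin d → ℝ) → ℝ) : (Fin d → ℝ) → ℝ :=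
  fun x => ∑ k ∈ p.support,
    p.coeff k * ((List.finRange d).foldr (fun i g => (Mop Cv mv i)^[k i] g) f) x

namespace Matrix

variable {n : Type*} [Fintype n]

theorem IsSymm.dotProduct_mulVec_comm {M : Matrix n n ℝ} (hM : M.IsSymm) (v w : n → ℝ) :
    v ⬝ᵥ M *ᵥ w = w ⬝ᵥ M *ᵥ v := by
  rw [dotProduct_mulVec, dotProduct_comm]
  conv_lhs => rw [← hM.eq, vecMul_transpose]

theorem hasFDerivAt_mulVec_dotProduct_self [DecidableEq n] {M : Matrix n n ℝ} (hM : M.IsSymm)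
    (v : n → ℝ) :
    HasFDerivAt (fun w => M *ᵥ w ⬝ᵥ w)
      ((2 : ℝ) • (toLinearMap₂' ℝ M : (n → ℝ) →ₗ[ℝ] (n → ℝ) →ₗ[ℝ] ℝ).toContinuousBilinearMap v)
      v := by
  set B := (toLinearMap₂' ℝ M : (n → ℝ) →ₗ[ℝ] (n → ℝ) →ₗ[ℝ] ℝ).toContinuousBilinearMap
  have hB : ∀ v w, B v w = v ⬝ᵥ M *ᵥ w := toLinearMap₂'_apply' M
  have hquad : (fun w => M *ᵥ w ⬝ᵥ w) = fun w => B w w := by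
    funext w
    rw [hB, dotProduct_comm]
  rw [hquad]
  refine (B.hasFDerivAt_of_bilinear (hasFDerivAt_id v) (hasFDerivAt_id v)).congr_fderiv ?_
  ext h
  simp [hB, hM.dotProduct_mulVec_comm h v, two_smul]

end Matrix

theorem pd_gauss {d : ℕ} {Cv : Matrix (Fin d) (Fin d) ℝ} (mv y : Fin d → ℝ) (hsym : Cv.IsSymm)
    (j : Fin d) (x : Fin d → ℝ) :
    pd j (fun x' => gauss Cv mv x' y) x = (Cv⁻¹ *ᵥ (y - x - mv)) j * gauss Cv mv x y := by
  have hu : HasFDerivAt (fun x' => y - x' - mv) (-ContinuousLinearMap.id ℝ (Fin d → ℝ)) x := by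
    simpa using ((hasFDerivAt_id (𝕜 := ℝ) x).const_sub y).sub_const mv
  have hΓ : HasFDerivAt (fun x' => gauss Cv mv x' y) _ x :=
    ((((Matrix.hasFDerivAt_mulVec_dotProduct_self hsym.inv _).comp x hu).const_mul
      (-(1 / 2) : ℝ)).exp).const_mul ((2 * π) ^ (-(d : ℝ) / 2) * Cv.det ^ (-(1 : ℝ) / 2))
  rw [pd, hΓ.fderiv]
  simp only [_root_.smul_apply, ContinuousLinearMap.comp_apply,
    _root_.neg_apply, ContinuousLinearMap.id_apply, map_neg,
    LinearMap.toContinuousBilinearMap_apply, Matrix.toLinearMap₂'_apply', smul_eq_mul,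
    hsym.inv.dotProduct_mulVec_comm _ (Pi.single j 1), single_one_dotProduct]
  simp only [gauss, Function.comp_apply]
  ring

theorem pd_const_mul {d : ℕ} (j : Fin d) (c : ℝ) (f : (Fin d → ℝ) → ℝ) :
    pd j (fun x => c * f x) = fun x => c * pd j f x := by
  funext x
  change fderiv ℝ (c • f) x _ = _
  rw [fderiv_const_smul_field]
  rfl

section Mop

variable {d : ℕ} {Cv : Matrix (Fin d) (Fin d) ℝ} {mv : Fin d → ℝ}

theorem Mop_const_mul (i : Fin d) (c : ℝ) (f : (Fin d → ℝ) → ℝ) :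
    Mop Cv mv i (fun x => c * f x) = fun x => c * Mop Cv mv i f x := by
  funext x
  simp only [Mop, pd_const_mul, mul_add, Finset.mul_sum, mul_left_comm c]

theorem Mop_gauss (hsym : Cv.IsSymm) (hdet : IsUnit Cv.det) (y : Fin d → ℝ) (i : Fin d) :
    Mop Cv mv i (fun x => gauss Cv mv x y) = fun x => y i * gauss Cv mv x y := by
  funext x
  have hCCinv : ∑ j, Cv i j * (Cv⁻¹ *ᵥ (y - x - mv)) j = y i - x i - mv i := by
    have h : Cv *ᵥ (Cv⁻¹ *ᵥ (y - x - mv)) = y - x - mv := by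
      rw [Matrix.mulVec_mulVec, Matrix.mul_nonsing_inv _ hdet, Matrix.one_mulVec]
    simpa only [Matrix.mulVec, dotProduct, Pi.sub_apply] using congrFun h i
  simp only [Mop, pd_gauss mv y hsym, ← mul_assoc, ← Finset.sum_mul, hCCinv]
  ring

theorem Mop_iterate_const_mul_gauss (hsym : Cv.IsSymm) (hdet : IsUnit Cv.det)
    (y : Fin d → ℝ) (i : Fin d) (c : ℝ) (n : ℕ) :
    (Mop Cv mv i)^[n] (fun x => c * gauss Cv mv x y) = fun x => c * y i ^ n * gauss Cv mv x y := by
  induction n with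
  | zero => simp
  | succ n ih =>
    rw [Function.iterate_succ_apply', ih, Mop_const_mul, Mop_gauss hsym hdet]
    funext x
    ring

theorem foldr_Mop_iterate_const_mul_gauss (hsym : Cv.IsSymm) (hdet : IsUnit Cv.det)
    (y : Fin d → ℝ) (k : Fin d →₀ ℕ) (l : List (Fin d)) (c : ℝ) :
    l.foldr (fun i g => (Mop Cv mv i)^[k i] g) (fun x => c * gauss Cv mv x y) =
      fun x => c * (l.map fun i => y i ^ k i).prod * gauss Cv mv x y := by
  induction l generalizing c with
  | nil => simp
  | cons i l ih =>
    simp only [List.foldr_cons, ih, Mop_iterate_const_mul_gauss hsym hdet, List.map_cons,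
      List.prod_cons]
    funext x
    ring

end Mop

theorem poly_mul_gauss_eq_polyOp_general {d : ℕ}
    (Cv : Matrix (Fin d) (Fin d) ℝ) (hCv : Cv.PosDef) (mv : Fin d → ℝ)
    (p : MvPolynomial (Fin d) ℝ) (x y : Fin d → ℝ) :
    MvPolynomial.eval y p * gauss Cv mv x y =
      polyOp Cv mv p (fun x' => gauss Cv mv x' y) x := by
  have hsym : Cv.IsSymm := Matrix.isHermitian_iff_isSymm.mp hCv.isHermitian
  have hdet : IsUnit Cv.det := (Matrix.isUnit_iff_isUnit_det Cv).mp hCv.isUnit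
  have hmonomial (k : Fin d →₀ ℕ) :
      (List.finRange d).foldr (fun i g => (Mop Cv mv i)^[k i] g) (fun x' => gauss Cv mv x' y) x =
        (∏ i, y i ^ k i) * gauss Cv mv x y := by
    simpa [Fin.prod_univ_def] using
      congrFun (foldr_Mop_iterate_const_mul_gauss hsym hdet y k (List.finRange d) 1) x
  simp only [polyOp, hmonomial, MvPolynomial.eval_eq', Finset.sum_mul, mul_assoc]

/-- for a polynomial `p` on `ℝ^d`, `p(y)·Γ₀(t,x;s,y) = p(ℳˣ(t,s))Γ₀(t,x;s,y)`. -/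
theorem poly_mul_gauss_eq_polyOp {d : ℕ} (t s : ℝ) (hts : t < s)
    (Cv : Matrix (Fin d) (Fin d) ℝ) (hCv : Cv.PosDef) (mv : Fin d → ℝ)
    (p : MvPolynomial (Fin d) ℝ) (x y : Fin d → ℝ) :
    MvPolynomial.eval y p * gauss Cv mv x y =
      polyOp Cv mv p (fun x' => gauss Cv mv x' y) x :=
  poly_mul_gauss_eq_polyOp_general Cv hCv mv p x y
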